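/- arXiv:1305.2736 — 3 statements merged into one kernel-verified Lean document; each statement's English description precedes it below -/
import Mathlib

section
/- Let n ≥ 1 and let r₁, …, r_N be the positive roots of the Aₙ configuration in ℝⁿ, where N = n(n+1)/2. Let B ⊂ ℝⁿ be an open ball and let φ₁, …, φ_N : ℝⁿ → ℝ be smooth functions whose supports are contained in B. Then there exists ε₀ > 0 such that for every ε with 0 < ε < ε₀ there is exactly one map H from ℝⁿ to the symmetric n×n real matrices satisfying ⟨H(x)(r_i + ε∇φ_i(x)), r_i + ε∇φ_i(x)⟩ = 2 for all x ∈ ℝⁿ and all i = 1, …, N; moreover this unique H is smooth, H(x) is positive definite for every x ∈ ℝⁿ, and H(x) is the identity matrix for every x ∉ B. -/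
open Matrix Metric
open scoped InnerProductSpace

/-- The matrix-vector product `A *ᵥ x`, viewed as a map on Euclidean space. -/
noncomputable def mdot {n : ℕ} (A : Matrix (Fin n) (Fin n) ℝ) (x : EuclideanSpace ℝ (Fin n)) :
    EuclideanSpace ℝ (Fin n) :=
  (WithLp.equiv 2 (Fin n → ℝ)).symm (A.mulVec (WithLp.equiv 2 (Fin n → ℝ) x))

namespace UMILaux

variable {n N : ℕ}

/-- Ordered index pairs. -/
abbrev Idx (n : ℕ) := {p : Fin n × Fin n // p.1 ≤ p.2}

/-- A symmetric matrix built from coordinates indexed by `Fin N` via `e`. -/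
noncomputable def symMat (e : Fin N ≃ Idx n) (f : Fin N → ℝ) : Matrix (Fin n) (Fin n) ℝ :=
  Matrix.of fun i j =>
    if h : i ≤ j then f (e.symm ⟨(i, j), h⟩) else f (e.symm ⟨(j, i), (not_le.mp h).le⟩)

lemma symMat_apply_le (e : Fin N ≃ Idx n) (f : Fin N → ℝ) {i j : Fin n} (h : i ≤ j) :
    symMat e f i j = f (e.symm ⟨(i, j), h⟩) := by
  simp [symMat, h]

lemma symMat_isSymm (e : Fin N ≃ Idx n) (f : Fin N → ℝ) : (symMat e f).IsSymm := by
  apply Matrix.IsSymm.ext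
  intro i j
  rcases le_total i j with h | h
  · rw [symMat_apply_le e f h]
    by_cases h' : j ≤ i
    · have hij : i = j := le_antisymm h h'
      subst hij
      simp [symMat]
    · simp [symMat, h']
  · rw [symMat_apply_le e f h]
    by_cases h' : i ≤ j
    · have hij : i = j := le_antisymm h' h
      subst hij
      simp [symMat]
    · simp [symMat, h']

lemma symMat_apply_idx (e : Fin N ≃ Idx n) (f : Fin N → ℝ) (p : Idx n) :
    symMat e f p.1.1 p.1.2 = f (e.symm p) := by
  rw [symMat_apply_le e f p.2]

/-- The coefficient of the unordered pair `p` in the quadratic form `u ⬝ᵥ A *ᵥ u`. -/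
def rowC (u : Fin n → ℝ) (p : Idx n) : ℝ :=
  if p.1.1 = p.1.2 then u p.1.1 * u p.1.2 else 2 * (u p.1.1 * u p.1.2)

/-- The matrix of the linear system expressing the constraints. -/
noncomputable def coeffM (e : Fin N ≃ Idx n) (w : Fin N → Fin n → ℝ) :
    Matrix (Fin N) (Fin N) ℝ :=
  Matrix.of fun k l => rowC (w k) (e l)

lemma key_identity (e : Fin N ≃ Idx n) (u : Fin n → ℝ) (f : Fin N → ℝ) :
    u ⬝ᵥ (symMat e f *ᵥ u) = ∑ l, rowC u (e l) * f l := by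
  classical
  set A := symMat e f with hA
  set T : Fin n × Fin n → ℝ := fun q => u q.1 * A q.1 q.2 * u q.2 with hT
  have hTsymm : ∀ a b : Fin n, T (a, b) = T (b, a) := by
    intro a b
    simp only [hT, hA]
    rw [(symMat_isSymm e f).apply a b]
    ring
  -- rewrite RHS as a sum over the subtype
  have hRHS : ∑ l, rowC u (e l) * f l
      = ∑ q ∈ Finset.univ.filter (fun q : Fin n × Fin n => q.1 ≤ q.2),
          (if q.1 = q.2 then T q else 2 * T q) := by
    have h1 : ∑ l, rowC u (e l) * f l = ∑ p : Idx n, rowC u p * f (e.symm p) := by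
      rw [← Equiv.sum_comp e (fun p => rowC u p * f (e.symm p))]
      simp
    rw [h1]
    have h2 : ∀ p : Idx n, rowC u p * f (e.symm p)
        = (fun q : Fin n × Fin n => if q.1 = q.2 then T q else 2 * T q) (p : Fin n × Fin n) := by
      intro p
      have hf : f (e.symm p) = A p.1.1 p.1.2 := (symMat_apply_idx e f p).symm
      rw [hf]
      show rowC u p * A p.1.1 p.1.2 = if p.1.1 = p.1.2 then T p.1 else 2 * T p.1
      by_cases hd : p.1.1 = p.1.2
      · rw [if_pos hd]
        simp only [rowC, hT, if_pos hd]
        ring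
      · rw [if_neg hd]
        simp only [rowC, hT, if_neg hd]
        ring
    rw [Finset.sum_congr rfl (fun p _ => h2 p)]
    exact (Finset.sum_subtype
      (Finset.univ.filter (fun q : Fin n × Fin n => q.1 ≤ q.2))
      (by intro q; simp)
      (fun q : Fin n × Fin n => if q.1 = q.2 then T q else 2 * T q)).symm
  rw [hRHS]
  -- rewrite LHS as a sum over all pairs
  have hLHS : u ⬝ᵥ (A *ᵥ u) = ∑ q : Fin n × Fin n, T q := by
    rw [Fintype.sum_prod_type]
    simp only [dotProduct, Matrix.mulVec, dotProduct, hT, Finset.mul_sum]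
    apply Finset.sum_congr rfl
    intro i _
    apply Finset.sum_congr rfl
    intro j _
    ring
  rw [hLHS]
  -- split the full sum
  rw [← Finset.sum_filter_add_sum_filter_not Finset.univ
    (fun q : Fin n × Fin n => q.1 ≤ q.2) T]
  have hswap : ∑ q ∈ Finset.univ.filter (fun q : Fin n × Fin n => ¬ q.1 ≤ q.2), T q
      = ∑ q ∈ Finset.univ.filter (fun q : Fin n × Fin n => q.1 < q.2), T q := by
    apply Finset.sum_nbij' (fun q => Prod.swap q) (fun q => Prod.swap q)
    · intro q hq
      simp only [Finset.mem_filter, Finset.mem_univ, true_and, not_le] at hq ⊢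
      exact hq
    · intro q hq
      simp only [Finset.mem_filter, Finset.mem_univ, true_and, not_le] at hq ⊢
      exact hq
    · intro q _; simp
    · intro q _; simp
    · intro q _
      exact (hTsymm q.2 q.1).symm
  rw [hswap]
  have hsplit : ∑ q ∈ Finset.univ.filter (fun q : Fin n × Fin n => q.1 ≤ q.2),
      (if q.1 = q.2 then T q else 2 * T q)
      = (∑ q ∈ Finset.univ.filter (fun q : Fin n × Fin n => q.1 ≤ q.2), T q)
        + ∑ q ∈ Finset.univ.filter (fun q : Fin n × Fin n => q.1 < q.2), T q := by
    have : ∀ q : Fin n × Fin n, (if q.1 = q.2 then T q else 2 * T q)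
        = T q + (if q.1 = q.2 then 0 else T q) := by
      intro q; split <;> ring
    simp only [this]
    rw [Finset.sum_add_distrib]
    congr 1
    rw [Finset.sum_filter, Finset.sum_filter]
    apply Finset.sum_congr rfl
    intro q _
    by_cases h1 : q.1 < q.2
    · rw [if_pos h1, if_pos h1.le, if_neg h1.ne]
    · by_cases h2 : q.1 ≤ q.2
      · have : q.1 = q.2 := le_antisymm h2 (not_lt.mp h1)
        rw [if_neg h1, if_pos h2, if_pos this]
      · rw [if_neg h1, if_neg h2]
  rw [hsplit]

/-- Coordinates of the unique symmetric solution. -/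
noncomputable def solC (e : Fin N ≃ Idx n) (w : Fin N → Fin n → ℝ) : Fin N → ℝ :=
  (coeffM e w).det⁻¹ • Matrix.cramer (coeffM e w) (fun _ => (2 : ℝ))

/-- The candidate metric. -/
noncomputable def Hmat (e : Fin N ≃ Idx n) (w : Fin N → Fin n → ℝ) :
    Matrix (Fin n) (Fin n) ℝ :=
  symMat e (solC e w)

lemma coeffM_mulVec (e : Fin N ≃ Idx n) (w : Fin N → Fin n → ℝ) (f : Fin N → ℝ) (k : Fin N) :
    (coeffM e w *ᵥ f) k = w k ⬝ᵥ (symMat e f *ᵥ w k) :=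
  (key_identity e (w k) f).symm

lemma Hmat_constraint (e : Fin N ≃ Idx n) {w : Fin N → Fin n → ℝ}
    (hdet : (coeffM e w).det ≠ 0) (k : Fin N) :
    w k ⬝ᵥ (Hmat e w *ᵥ w k) = 2 := by
  have h1 : coeffM e w *ᵥ solC e w = fun _ => (2 : ℝ) := by
    unfold solC
    rw [Matrix.mulVec_smul, Matrix.mulVec_cramer]
    funext k
    simp only [Pi.smul_apply, smul_eq_mul]
    rw [← mul_assoc, inv_mul_cancel₀ hdet, one_mul]
  rw [Hmat, ← coeffM_mulVec, h1]

lemma Hmat_unique (e : Fin N ≃ Idx n) {w : Fin N → Fin n → ℝ}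
    (hdet : (coeffM e w).det ≠ 0) (A : Matrix (Fin n) (Fin n) ℝ)
    (hAs : A.IsSymm) (hAc : ∀ k, w k ⬝ᵥ (A *ᵥ w k) = 2) :
    A = Hmat e w := by
  classical
  set f' : Fin N → ℝ := fun l => A (e l).1.1 (e l).1.2 with hf'
  have hsA : symMat e f' = A := by
    ext i j
    by_cases h : i ≤ j
    · rw [symMat_apply_le e f' h]
      simp [hf']
    · have h' : j ≤ i := (not_le.mp h).le
      have : symMat e f' i j = symMat e f' j i := (symMat_isSymm e f').apply j i
      rw [this, symMat_apply_le e f' h']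
      simp [hf', hAs.apply i j]
  have heq : coeffM e w *ᵥ f' = coeffM e w *ᵥ solC e w := by
    funext k
    rw [coeffM_mulVec, coeffM_mulVec, hsA, hAc k]
    rw [← Hmat, Hmat_constraint e hdet k]
  have hzero : coeffM e w *ᵥ (f' - solC e w) = 0 := by
    rw [Matrix.mulVec_sub, heq, sub_self]
  have hfs : f' = solC e w := by
    by_contra hne
    have : ∃ v, v ≠ 0 ∧ coeffM e w *ᵥ v = 0 :=
      ⟨f' - solC e w, sub_ne_zero.mpr hne, hzero⟩
    exact hdet (Matrix.exists_mulVec_eq_zero_iff.mp this)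
  rw [← hsA, hfs, Hmat]

/-- Injectivity of the linear system at an admissible configuration of roots. -/
lemma det_coeffM_ne_zero (hn : 1 ≤ n) (e : Fin N ≃ Idx n)
    (w : Fin N → Fin n → ℝ) (v' : Fin n → Fin n → ℝ)
    (hg : ∀ i j, v' i ⬝ᵥ v' j = if i = j then 2 else 1)
    (hcov : ∀ i, ∃ k, w k = v' i)
    (hcov2 : ∀ i j, i < j → ∃ k, w k = v' i - v' j) :
    (coeffM e w).det ≠ 0 := by
  classical
  intro hdet0
  obtain ⟨f, hf0, hfz⟩ := Matrix.exists_mulVec_eq_zero_iff.mpr hdet0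
  set A := symMat e f with hA
  have hAs : A.IsSymm := symMat_isSymm e f
  have hq : ∀ k, w k ⬝ᵥ (A *ᵥ w k) = 0 := by
    intro k
    rw [hA, ← coeffM_mulVec, hfz]
    rfl
  have hBsymm : ∀ u z : Fin n → ℝ, u ⬝ᵥ (A *ᵥ z) = z ⬝ᵥ (A *ᵥ u) := by
    intro u z
    rw [Matrix.dotProduct_mulVec, ← Matrix.mulVec_transpose, hAs.eq, dotProduct_comm]
  have hvv : ∀ i j, v' i ⬝ᵥ (A *ᵥ v' j) = 0 := by
    have hvv' : ∀ i j, i < j → v' i ⬝ᵥ (A *ᵥ v' j) = 0 := by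
      intro i j hij
      obtain ⟨k2, hk2⟩ := hcov2 i j hij
      obtain ⟨ki, hki⟩ := hcov i
      obtain ⟨kj, hkj⟩ := hcov j
      have h2 := hq k2
      rw [hk2] at h2
      have hii := hq ki; rw [hki] at hii
      have hjj := hq kj; rw [hkj] at hjj
      rw [Matrix.mulVec_sub, sub_dotProduct, dotProduct_sub,
        dotProduct_sub, hii, hjj, hBsymm (v' j) (v' i)] at h2
      linarith
    intro i j
    rcases lt_trichotomy i j with h | h | h
    · exact hvv' i j h
    · subst h
      obtain ⟨k, hk⟩ := hcov i
      have := hq k; rwa [hk] at this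
    · rw [hBsymm]; exact hvv' j i h
  -- v' is linearly independent, hence spans
  have hli : LinearIndependent ℝ v' := by
    rw [Fintype.linearIndependent_iff]
    intro c hc
    have hrow : ∀ j, c j + (∑ i, c i) = 0 := by
      intro j
      have h0 : ∑ i, c i * (v' i ⬝ᵥ v' j) = 0 := by
        have h := congrArg (fun u => u ⬝ᵥ v' j) hc
        simp only [zero_dotProduct] at h
        rw [← h]
        simp only [dotProduct, Finset.sum_apply, Pi.smul_apply, smul_eq_mul, Finset.mul_sum]
        rw [Finset.sum_comm]
        apply Finset.sum_congr rfl
        intro a _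
        rw [Finset.sum_mul]
        apply Finset.sum_congr rfl
        intro i _
        ring
      have h1 : ∀ i, c i * (v' i ⬝ᵥ v' j) = c i + (if i = j then c i else 0) := by
        intro i
        rw [hg i j]
        by_cases h : i = j <;> simp [h] <;> ring
      rw [Finset.sum_congr rfl (fun i _ => h1 i), Finset.sum_add_distrib,
        Finset.sum_ite_eq' Finset.univ j c] at h0
      simp only [Finset.mem_univ, if_true] at h0
      linarith [h0]
    have hsum : (∑ i, c i) = 0 := by
      have h2 : ∑ j, (c j + (∑ i, c i)) = 0 := by
        rw [Finset.sum_congr rfl (fun j _ => hrow j)]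
        simp
      rw [Finset.sum_add_distrib, Finset.sum_const, Finset.card_univ, Fintype.card_fin,
        nsmul_eq_mul] at h2
      have hmul : (∑ i, c i) * (1 + (n : ℝ)) = 0 := by linear_combination h2
      exact (mul_eq_zero.mp hmul).resolve_right (by positivity)
    intro j
    have := hrow j
    rw [hsum] at this
    linarith
  have hspan : Submodule.span ℝ (Set.range v') = ⊤ := by
    have : Nonempty (Fin n) := ⟨⟨0, hn⟩⟩
    exact hli.span_eq_top_of_card_eq_finrank
      (by simp [Module.finrank_fintype_fun_eq_card])
  -- hence the bilinear form vanishes identically and A = 0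
  have step1 : ∀ i (z : Fin n → ℝ), v' i ⬝ᵥ (A *ᵥ z) = 0 := by
    intro i z
    have hz : z ∈ Submodule.span ℝ (Set.range v') := by rw [hspan]; trivial
    induction hz using Submodule.span_induction with
    | mem x hx => obtain ⟨j, rfl⟩ := hx; exact hvv i j
    | zero => simp
    | add x y hx hy ihx ihy => rw [Matrix.mulVec_add, dotProduct_add, ihx, ihy]; ring
    | smul a x hx ihx => rw [Matrix.mulVec_smul, dotProduct_smul, ihx]; simp
  have step2 : ∀ (u z : Fin n → ℝ), u ⬝ᵥ (A *ᵥ z) = 0 := by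
    intro u z
    have hu : u ∈ Submodule.span ℝ (Set.range v') := by rw [hspan]; trivial
    induction hu using Submodule.span_induction with
    | mem x hx => obtain ⟨i, rfl⟩ := hx; exact step1 i z
    | zero => simp
    | add x y hx hy ihx ihy => rw [add_dotProduct, ihx, ihy]; ring
    | smul a x hx ihx => rw [smul_dotProduct, ihx]; simp
  have hA0 : A = 0 := by
    ext i j
    have := step2 (Pi.single i 1) (Pi.single j 1)
    rw [Matrix.mulVec_single, single_dotProduct] at this
    simpa using this
  apply hf0
  funext l
  have := symMat_apply_idx e f (e l)
  rw [← hA, hA0] at this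
  simpa using this.symm

lemma contDiff_det_comp {X : Type*} [NormedAddCommGroup X] [NormedSpace ℝ X]
    {ι : Type*} [Fintype ι] [DecidableEq ι]
    (M : X → Matrix ι ι ℝ) (h : ∀ i j, ContDiff ℝ (⊤ : ℕ∞) fun x => M x i j) :
    ContDiff ℝ (⊤ : ℕ∞) fun x => (M x).det := by
  have hdet : (fun x => (M x).det)
      = fun x => ∑ σ : Equiv.Perm ι, ((Equiv.Perm.sign σ : ℤ) : ℝ) * ∏ i, M x (σ i) i :=
    funext fun x => Matrix.det_apply' (M x)
  rw [hdet]
  apply ContDiff.sum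
  intro σ _
  exact contDiff_const.mul (contDiff_prod fun i _ => h (σ i) i)

lemma posDef_of_entries_close (hn : 1 ≤ n) (A : Matrix (Fin n) (Fin n) ℝ) (hs : A.IsSymm)
    (h : ∀ i j, |A i j - (1 : Matrix (Fin n) (Fin n) ℝ) i j| ≤ (2 * (n : ℝ))⁻¹) :
    A.PosDef := by
  have hn0 : (0:ℝ) < (n:ℝ) := by exact_mod_cast hn
  rw [Matrix.posDef_iff_dotProduct_mulVec]
  constructor
  · rw [Matrix.IsHermitian, Matrix.conjTranspose_eq_transpose_of_trivial]
    exact hs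
  · intro x hx
    have hstar : star x = x := by funext i; simp
    rw [hstar]
    have hdec : x ⬝ᵥ (A *ᵥ x) = x ⬝ᵥ ((A - 1) *ᵥ x) + x ⬝ᵥ x := by
      rw [Matrix.sub_mulVec, dotProduct_sub, Matrix.one_mulVec]
      ring
    set S := ∑ i, |x i| with hS
    have hSnn : 0 ≤ S := Finset.sum_nonneg fun i _ => abs_nonneg _
    have hxx : x ⬝ᵥ x = ∑ i, x i ^ 2 := by
      simp [dotProduct, pow_two]
    have hpos : 0 < ∑ i, x i ^ 2 := by
      obtain ⟨i0, hi0⟩ := Function.ne_iff.mp hx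
      exact Finset.sum_pos' (fun i _ => sq_nonneg _)
        ⟨i0, Finset.mem_univ i0, by exact pow_two_pos_of_ne_zero hi0⟩
    have hrowbound : ∀ i, |((A - 1) *ᵥ x) i| ≤ (2 * (n:ℝ))⁻¹ * S := by
      intro i
      calc |((A - 1) *ᵥ x) i| = |∑ j, (A - 1) i j * x j| := rfl
        _ ≤ ∑ j, |(A - 1) i j * x j| := Finset.abs_sum_le_sum_abs _ _
        _ ≤ ∑ j, (2 * (n:ℝ))⁻¹ * |x j| := by
            apply Finset.sum_le_sum
            intro j _
            rw [abs_mul]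
            exact mul_le_mul_of_nonneg_right
              (by simpa [Matrix.sub_apply] using h i j) (abs_nonneg _)
        _ = (2 * (n:ℝ))⁻¹ * S := by rw [← Finset.mul_sum]
    have herr : |x ⬝ᵥ ((A - 1) *ᵥ x)| ≤ (2 * (n:ℝ))⁻¹ * S * S := by
      calc |x ⬝ᵥ ((A - 1) *ᵥ x)| = |∑ i, x i * ((A - 1) *ᵥ x) i| := rfl
        _ ≤ ∑ i, |x i * ((A - 1) *ᵥ x) i| := Finset.abs_sum_le_sum_abs _ _
        _ ≤ ∑ i, |x i| * ((2 * (n:ℝ))⁻¹ * S) := by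
            apply Finset.sum_le_sum
            intro i _
            rw [abs_mul]
            exact mul_le_mul_of_nonneg_left (hrowbound i) (abs_nonneg _)
        _ = (2 * (n:ℝ))⁻¹ * S * S := by rw [← Finset.sum_mul]; ring
    have hS2 : S * S ≤ (n:ℝ) * ∑ i, x i ^ 2 := by
      have h1 := sq_sum_le_card_mul_sum_sq (s := (Finset.univ : Finset (Fin n)))
        (f := fun i : Fin n => |x i|)
      rw [← hS] at h1
      simp only [sq_abs, Finset.card_univ, Fintype.card_fin] at h1
      calc S * S = S ^ 2 := (sq S).symm
        _ ≤ _ := h1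
    have hfinal : |x ⬝ᵥ ((A - 1) *ᵥ x)| ≤ (1/2) * ∑ i, x i ^ 2 := by
      refine herr.trans ?_
      have h2 : (2 * (n:ℝ))⁻¹ * S * S = (2 * (n:ℝ))⁻¹ * (S * S) := by ring
      rw [h2]
      calc (2 * (n:ℝ))⁻¹ * (S * S) ≤ (2 * (n:ℝ))⁻¹ * ((n:ℝ) * ∑ i, x i ^ 2) := by
            apply mul_le_mul_of_nonneg_left hS2
            positivity
        _ = (1/2) * ∑ i, x i ^ 2 := by
            field_simp
    rw [hdec, hxx]
    have habs := abs_le.mp hfinal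
    linarith [habs.1]

end UMILaux

/-- Let `r₁, …, r_N` (`N = n(n+1)/2`) be the positive roots of the `Aₙ` configuration in `ℝⁿ`,
i.e. an enumeration of the vectors `v₁, …, vₙ` (with `⟨vᵢ, vⱼ⟩ = 2` if `i = j` and `1`
otherwise) together with the differences `vᵢ − vⱼ`, `i < j`.  Let `B` be an open ball and let
`φ₁, …, φ_N` be smooth functions supported in `B`.  Then for all sufficiently small `ε > 0`
there is exactly one map `H` from `ℝⁿ` to the symmetric matrices with
`⟨H(x)(rᵢ + ε∇φᵢ(x)), rᵢ + ε∇φᵢ(x)⟩ = 2` for all `x` and `i`; moreover this unique `H` is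
smooth, pointwise positive definite, and equal to the identity outside `B`. -/
theorem unique_metric_for_invariant_lagrangians
    {n : ℕ} (hn : 1 ≤ n) (N : ℕ) (hN : N = n * (n + 1) / 2)
    (v : Fin n → EuclideanSpace ℝ (Fin n))
    (hv : ∀ i j, ⟪v i, v j⟫_ℝ = if i = j then 2 else 1)
    (r : Fin N → EuclideanSpace ℝ (Fin n))
    (hrinj : Function.Injective r)
    (hr : Set.range r = Set.range v ∪ {x | ∃ i j : Fin n, i < j ∧ x = v i - v j})
    (x₀ : EuclideanSpace ℝ (Fin n)) (R : ℝ) (hR : 0 < R)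
    (φ : Fin N → EuclideanSpace ℝ (Fin n) → ℝ)
    (hφ : ∀ k, ContDiff ℝ (⊤ : ℕ∞) (φ k))
    (hsupp : ∀ k, tsupport (φ k) ⊆ ball x₀ R) :
    ∃ ε₀ > (0 : ℝ), ∀ ε : ℝ, 0 < ε → ε < ε₀ →
      ∃ H : EuclideanSpace ℝ (Fin n) → Matrix (Fin n) (Fin n) ℝ,
        ((∀ x, (H x).IsSymm) ∧
          (∀ x, ∀ k, ⟪mdot (H x) (r k + ε • gradient (φ k) x),
              r k + ε • gradient (φ k) x⟫_ℝ = 2)) ∧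
        (∀ H' : EuclideanSpace ℝ (Fin n) → Matrix (Fin n) (Fin n) ℝ,
          ((∀ x, (H' x).IsSymm) ∧
            (∀ x, ∀ k, ⟪mdot (H' x) (r k + ε • gradient (φ k) x),
                r k + ε • gradient (φ k) x⟫_ℝ = 2)) → H' = H) ∧
        (∀ i j : Fin n, ContDiff ℝ (⊤ : ℕ∞) fun x => H x i j) ∧
        (∀ x, (H x).PosDef) ∧
        (∀ x, x ∉ ball x₀ R → H x = 1) := by
  classical
  -- the index equivalence
  have hcard : Fintype.card (UMILaux.Idx n) = N := by
    have h1 : Fintype.card (UMILaux.Idx n) = Fintype.card (Sym2 (Fin n)) :=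
      (Fintype.card_congr Sym2.sortEquiv).symm
    rw [h1, Sym2.card]
    simp only [Fintype.card_fin]
    rw [Nat.choose_two_right, hN, Nat.add_sub_cancel, Nat.mul_comm]
  set e : Fin N ≃ UMILaux.Idx n := (Fintype.equivFinOfCardEq hcard).symm with he
  -- coordinates and basic inner-product translations
  have hdot : ∀ u w : EuclideanSpace ℝ (Fin n),
      (WithLp.equiv 2 (Fin n → ℝ) u) ⬝ᵥ (WithLp.equiv 2 (Fin n → ℝ) w) = ⟪u, w⟫_ℝ := by
    intro u w
    simp only [PiLp.inner_apply, RCLike.inner_apply, conj_trivial, dotProduct,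
      WithLp.equiv_apply]
    exact Finset.sum_congr rfl fun i _ => mul_comm _ _
  have hinner : ∀ (A : Matrix (Fin n) (Fin n) ℝ) (u : EuclideanSpace ℝ (Fin n)),
      ⟪mdot A u, u⟫_ℝ
        = (WithLp.equiv 2 (Fin n → ℝ) u) ⬝ᵥ (A *ᵥ (WithLp.equiv 2 (Fin n → ℝ) u)) := by
    intro A u
    simp only [mdot, PiLp.inner_apply, RCLike.inner_apply, conj_trivial,
      WithLp.equiv_symm_apply, WithLp.equiv_apply, PiLp.toLp_apply, dotProduct]
  set r' : Fin N → Fin n → ℝ := fun k => WithLp.equiv 2 (Fin n → ℝ) (r k) with hr'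
  have hnorm : ∀ k, r' k ⬝ᵥ r' k = 2 := by
    intro k
    show WithLp.equiv 2 (Fin n → ℝ) (r k) ⬝ᵥ WithLp.equiv 2 (Fin n → ℝ) (r k) = 2
    rw [hdot]
    have hk : r k ∈ Set.range v ∪ {x | ∃ i j : Fin n, i < j ∧ x = v i - v j} := by
      rw [← hr]; exact Set.mem_range_self k
    rcases hk with ⟨i, hi⟩ | ⟨i, j, hij, hx⟩
    · rw [← hi, hv i i]; simp
    · rw [hx, inner_sub_left, inner_sub_right, inner_sub_right, hv i i, hv i j, hv j i, hv j j]
      have hne : i ≠ j := ne_of_lt hij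
      simp only [if_pos rfl, if_neg hne, if_neg hne.symm]
      norm_num
  -- gradients
  have hg : ∀ k, ContDiff ℝ (⊤ : ℕ∞) (fun x => gradient (φ k) x) := by
    intro k
    have h1 : ContDiff ℝ (⊤ : ℕ∞) (fderiv ℝ (φ k)) := (hφ k).fderiv_right (by simp)
    exact (InnerProductSpace.toDual ℝ (EuclideanSpace ℝ (Fin n))).symm.contDiff.comp h1
  have hg0 : ∀ k x, x ∉ ball x₀ R → gradient (φ k) x = 0 := by
    intro k x hx
    have hxn : x ∉ tsupport (φ k) := fun hmem => hx (hsupp k hmem)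
    have hfd : fderiv ℝ (φ k) x = 0 := by
      by_contra hne
      exact hxn (tsupport_fderiv_subset ℝ (subset_tsupport _ (Function.mem_support.mpr hne)))
    show (InnerProductSpace.toDual ℝ (EuclideanSpace ℝ (Fin n))).symm (fderiv ℝ (φ k) x) = 0
    rw [hfd]; simp
  have hbd : ∀ k, ∃ Ck : ℝ, ∀ x, ‖gradient (φ k) x‖ ≤ Ck := by
    intro k
    have hcs : HasCompactSupport (fun x => gradient (φ k) x) := by
      apply HasCompactSupport.intro (isCompact_closedBall x₀ R)
      intro x hx
      exact hg0 k x (fun hxb => hx (ball_subset_closedBall hxb))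
    exact hcs.exists_bound_of_continuous (hg k).continuous
  choose C0 hC0 using hbd
  set C : ℝ := 1 + ∑ k, |C0 k| with hCdef
  have hCpos : 0 < C := by positivity
  have hgb : ∀ k x, ‖gradient (φ k) x‖ ≤ C := by
    intro k x
    calc ‖gradient (φ k) x‖ ≤ C0 k := hC0 k x
      _ ≤ |C0 k| := le_abs_self _
      _ ≤ ∑ k, |C0 k| := Finset.single_le_sum (f := fun k => |C0 k|)
        (fun i _ => abs_nonneg _) (Finset.mem_univ k)
      _ ≤ C := by rw [hCdef]; linarith
  -- the determinant is nonzero at the unperturbed configuration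
  set v' : Fin n → Fin n → ℝ := fun i => WithLp.equiv 2 (Fin n → ℝ) (v i) with hv'
  have hdet0 : (UMILaux.coeffM e r').det ≠ 0 := by
    apply UMILaux.det_coeffM_ne_zero hn e r' v'
    · intro i j
      rw [hv', hdot]
      exact hv i j
    · intro i
      have hmem : v i ∈ Set.range r := by rw [hr]; exact Set.mem_union_left _ ⟨i, rfl⟩
      obtain ⟨k, hk⟩ := hmem
      refine ⟨k, ?_⟩
      show WithLp.equiv 2 (Fin n → ℝ) (r k) = v' i
      rw [hk]
    · intro i j hij
      have hmem : v i - v j ∈ Set.range r := by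
        rw [hr]; exact Set.mem_union_right _ ⟨i, j, hij, rfl⟩
      obtain ⟨k, hk⟩ := hmem
      refine ⟨k, ?_⟩
      show WithLp.equiv 2 (Fin n → ℝ) (r k) = v' i - v' j
      rw [hk]; rfl
  have hH1 : UMILaux.Hmat e r' = 1 :=
    (UMILaux.Hmat_unique e hdet0 1 Matrix.isSymm_one
      (fun k => by rw [Matrix.one_mulVec]; exact hnorm k)).symm
  -- continuity of the solution map
  have hentry : ∀ k l, Continuous (fun w : Fin N → Fin n → ℝ => UMILaux.coeffM e w k l) := by
    intro k l
    show Continuous fun w : Fin N → Fin n → ℝ => UMILaux.rowC (w k) (e l)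
    have h1 : Continuous fun w : Fin N → Fin n → ℝ => (w k) (e l).1.1 :=
      (continuous_apply _).comp (continuous_apply k)
    have h2 : Continuous fun w : Fin N → Fin n → ℝ => (w k) (e l).1.2 :=
      (continuous_apply _).comp (continuous_apply k)
    unfold UMILaux.rowC
    by_cases hc : (e l).1.1 = (e l).1.2
    · simp only [if_pos hc]; exact h1.mul h2
    · simp only [if_neg hc]; exact continuous_const.mul (h1.mul h2)
  have hM : Continuous fun w : Fin N → Fin n → ℝ => UMILaux.coeffM e w :=
    continuous_matrix fun k l => hentry k l
  have hdetc : Continuous fun w : Fin N → Fin n → ℝ => (UMILaux.coeffM e w).det :=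
    hM.matrix_det
  have hcram : Continuous fun w : Fin N → Fin n → ℝ =>
      (UMILaux.coeffM e w).cramer (fun _ => (2 : ℝ)) :=
    hM.matrix_cramer continuous_const
  have hsolCc : ∀ l, ContinuousAt (fun w : Fin N → Fin n → ℝ => UMILaux.solC e w l) r' := by
    intro l
    unfold UMILaux.solC
    simp only [Pi.smul_apply, smul_eq_mul]
    exact (hdetc.continuousAt.inv₀ hdet0).mul ((continuous_apply l).comp hcram).continuousAt
  have hFc : ContinuousAt (fun w : Fin N → Fin n → ℝ =>
      ((UMILaux.coeffM e w).det, fun i j => UMILaux.Hmat e w i j)) r' := by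
    apply ContinuousAt.prodMk
    · exact hdetc.continuousAt
    · apply continuousAt_pi.mpr
      intro i
      apply continuousAt_pi.mpr
      intro j
      show ContinuousAt (fun w : Fin N → Fin n → ℝ => UMILaux.Hmat e w i j) r'
      unfold UMILaux.Hmat UMILaux.symMat
      simp only [Matrix.of_apply]
      by_cases hc : i ≤ j
      · simp only [dif_pos hc]; exact hsolCc _
      · simp only [dif_neg hc]; exact hsolCc _
  set ρ : ℝ := min ((2 * (n : ℝ))⁻¹) |(UMILaux.coeffM e r').det| with hρ
  have hn0 : (0:ℝ) < (n:ℝ) := by exact_mod_cast hn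
  have hρpos : 0 < ρ := lt_min (by positivity) (abs_pos.mpr hdet0)
  obtain ⟨η, hηpos, hη⟩ := Metric.continuousAt_iff.mp hFc ρ hρpos
  refine ⟨η / C, div_pos hηpos hCpos, ?_⟩
  intro ε hε hεlt
  set W : EuclideanSpace ℝ (Fin n) → Fin N → Fin n → ℝ :=
    fun x k => WithLp.equiv 2 (Fin n → ℝ) (r k + ε • gradient (φ k) x) with hWdef
  have hcoord : ∀ (u : EuclideanSpace ℝ (Fin n)) (i : Fin n),
      |WithLp.equiv 2 (Fin n → ℝ) u i| ≤ ‖u‖ := by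
    intro u i
    refine le_trans (le_of_eq (Real.sqrt_sq_eq_abs (u i)).symm) ?_
    rw [EuclideanSpace.norm_eq]
    apply Real.sqrt_le_sqrt
    have h := Finset.single_le_sum (f := fun j => ‖u j‖ ^ 2)
      (fun j _ => sq_nonneg _) (Finset.mem_univ i)
    simpa [Real.norm_eq_abs, sq_abs] using h
  have hclose : ∀ x, dist (W x) r' < η := by
    intro x
    rw [dist_pi_lt_iff hηpos]
    intro k
    rw [dist_pi_lt_iff hηpos]
    intro i
    rw [Real.dist_eq]
    have h1 : W x k i - r' k i = ε * (WithLp.equiv 2 (Fin n → ℝ) (gradient (φ k) x) i) := by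
      show WithLp.equiv 2 (Fin n → ℝ) (r k + ε • gradient (φ k) x) i
        - WithLp.equiv 2 (Fin n → ℝ) (r k) i = _
      simp only [WithLp.equiv_apply, WithLp.ofLp_add, WithLp.ofLp_smul, Pi.add_apply, Pi.smul_apply, smul_eq_mul]
      ring
    rw [h1, abs_mul, abs_of_pos hε]
    calc ε * |WithLp.equiv 2 (Fin n → ℝ) (gradient (φ k) x) i|
        ≤ ε * C := mul_le_mul_of_nonneg_left ((hcoord _ i).trans (hgb k x)) hε.le
      _ < η := (lt_div_iff₀ hCpos).mp hεlt
  have hdetx : ∀ x, (UMILaux.coeffM e (W x)).det ≠ 0 := by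
    intro x
    have h := hη (hclose x)
    intro h0
    have h1 : dist (UMILaux.coeffM e (W x)).det (UMILaux.coeffM e r').det
        < |(UMILaux.coeffM e r').det| := by
      calc dist (UMILaux.coeffM e (W x)).det (UMILaux.coeffM e r').det
          ≤ dist ((UMILaux.coeffM e (W x)).det, fun i j => UMILaux.Hmat e (W x) i j)
            ((UMILaux.coeffM e r').det, fun i j => UMILaux.Hmat e r' i j) := by
            rw [Prod.dist_eq]; exact le_max_left _ _
        _ < ρ := h
        _ ≤ _ := min_le_right _ _
    rw [h0, Real.dist_eq, zero_sub, abs_neg] at h1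
    exact lt_irrefl _ h1
  have hHclose : ∀ x i j,
      |UMILaux.Hmat e (W x) i j - UMILaux.Hmat e r' i j| ≤ (2 * (n : ℝ))⁻¹ := by
    intro x i j
    have h := hη (hclose x)
    have h2 : dist (fun i j => UMILaux.Hmat e (W x) i j)
        (fun i j => UMILaux.Hmat e r' i j) < ρ := by
      calc dist (fun i j => UMILaux.Hmat e (W x) i j) (fun i j => UMILaux.Hmat e r' i j)
          ≤ dist ((UMILaux.coeffM e (W x)).det, fun i j => UMILaux.Hmat e (W x) i j)
            ((UMILaux.coeffM e r').det, fun i j => UMILaux.Hmat e r' i j) := by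
            rw [Prod.dist_eq]; exact le_max_right _ _
        _ < ρ := h
    set P : Fin n → Fin n → ℝ := fun i j => UMILaux.Hmat e (W x) i j with hP
    set Q : Fin n → Fin n → ℝ := fun i j => UMILaux.Hmat e r' i j with hQ
    have h3 : dist (P i j) (Q i j) < ρ := by
      calc dist (P i j) (Q i j) ≤ dist (P i) (Q i) := dist_le_pi_dist (P i) (Q i) j
        _ ≤ dist P Q := dist_le_pi_dist P Q i
        _ < ρ := h2
    rw [Real.dist_eq] at h3
    exact le_of_lt (lt_of_lt_of_le h3 (min_le_left _ _))
  refine ⟨fun x => UMILaux.Hmat e (W x),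
    ⟨fun x => UMILaux.symMat_isSymm e _, fun x k => ?_⟩, ?_, ?_, ?_, ?_⟩
  · -- constraint
    rw [hinner]
    exact UMILaux.Hmat_constraint e (hdetx x) k
  · -- uniqueness
    rintro H' ⟨hs', hc'⟩
    funext x
    apply UMILaux.Hmat_unique e (hdetx x) (H' x) (hs' x)
    intro k
    have h := hc' x k
    rw [hinner] at h
    exact h
  · -- smoothness
    intro i j
    have hWc : ∀ k i', ContDiff ℝ (⊤ : ℕ∞) (fun x => W x k i') := by
      intro k i'
      have h1 : ContDiff ℝ (⊤ : ℕ∞) (fun x => r k + ε • gradient (φ k) x) :=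
        contDiff_const.add ((hg k).const_smul ε)
      exact (EuclideanSpace.proj i' :
        EuclideanSpace ℝ (Fin n) →L[ℝ] ℝ).contDiff.comp h1
    have hMc : ∀ k l, ContDiff ℝ (⊤ : ℕ∞) (fun x => UMILaux.coeffM e (W x) k l) := by
      intro k l
      show ContDiff ℝ (⊤ : ℕ∞) fun x => UMILaux.rowC (W x k) (e l)
      unfold UMILaux.rowC
      by_cases hc : (e l).1.1 = (e l).1.2
      · simp only [if_pos hc]; exact (hWc k _).mul (hWc k _)
      · simp only [if_neg hc]; exact contDiff_const.mul ((hWc k _).mul (hWc k _))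
    have hdc : ContDiff ℝ (⊤ : ℕ∞) (fun x => (UMILaux.coeffM e (W x)).det) :=
      UMILaux.contDiff_det_comp _ hMc
    have hsc : ∀ l, ContDiff ℝ (⊤ : ℕ∞) (fun x => UMILaux.solC e (W x) l) := by
      intro l
      unfold UMILaux.solC
      simp only [Pi.smul_apply, smul_eq_mul]
      apply ContDiff.mul
      · exact hdc.inv (fun x => hdetx x)
      · simp only [Matrix.cramer_apply]
        apply UMILaux.contDiff_det_comp
        intro a b
        by_cases hb : b = l
        · simp only [Matrix.updateCol_apply, if_pos hb]
          exact contDiff_const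
        · simp only [Matrix.updateCol_apply, if_neg hb]
          exact hMc a b
    show ContDiff ℝ (⊤ : ℕ∞) fun x => UMILaux.symMat e (UMILaux.solC e (W x)) i j
    unfold UMILaux.symMat
    simp only [Matrix.of_apply]
    by_cases hc : i ≤ j
    · simp only [dif_pos hc]; exact hsc _
    · simp only [dif_neg hc]; exact hsc _
  · -- positive definiteness
    intro x
    apply UMILaux.posDef_of_entries_close hn _ (UMILaux.symMat_isSymm e _)
    intro i j
    have h := hHclose x i j
    rw [hH1] at h
    exact h
  · -- identity outside the ball
    intro x hx
    have hWx : W x = r' := by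
      funext k
      show WithLp.equiv 2 (Fin n → ℝ) (r k + ε • gradient (φ k) x)
        = WithLp.equiv 2 (Fin n → ℝ) (r k)
      rw [hg0 k x hx, smul_zero, add_zero]
    show UMILaux.Hmat e (W x) = 1
    rw [hWx]
    exact hH1
end

section
/- Let n ≥ 1 and let r₁, …, r_N be the positive roots of the Aₙ configuration in ℝⁿ, where N = n(n+1)/2. The linear map from the space of symmetric n×n real matrices to ℝ^N that sends a symmetric matrix A to the tuple (⟨A r₁, r₁⟩, …, ⟨A r_N, r_N⟩) is a linear isomorphism; in particular it is injective, and since the space of symmetric n×n matrices has dimension N it is also surjective. -/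
open Matrix
open scoped InnerProductSpace

/-- The space of symmetric `n × n` real matrices, as a submodule of all matrices. -/
def symMatrix (n : ℕ) : Submodule ℝ (Matrix (Fin n) (Fin n) ℝ) where
  carrier := {A | A.IsSymm}
  add_mem' hA hB := hA.add hB
  zero_mem' := Matrix.isSymm_zero
  smul_mem' c _ hA := hA.smul c

lemma inner_mdot {n : ℕ} (A : Matrix (Fin n) (Fin n) ℝ) (x y : EuclideanSpace ℝ (Fin n)) :
    ⟪mdot A x, y⟫_ℝ = (A.mulVec (WithLp.equiv 2 (Fin n → ℝ) x)) ⬝ᵥ (WithLp.equiv 2 (Fin n → ℝ) y) := by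
  simp [mdot, PiLp.inner_apply, dotProduct, mul_comm]

lemma inner_mdot_symm {n : ℕ} (A : Matrix (Fin n) (Fin n) ℝ) (hA : A.IsSymm)
    (x y : EuclideanSpace ℝ (Fin n)) : ⟪mdot A x, y⟫_ℝ = ⟪mdot A y, x⟫_ℝ := by
  rw [inner_mdot, inner_mdot, dotProduct_comm, Matrix.dotProduct_mulVec,
    ← hA, Matrix.vecMul_transpose, hA]

/-- The symmetric matrices are isomorphic to functions on `Sym2 (Fin n)`. -/
noncomputable def symMatrixEquiv (n : ℕ) : (Sym2 (Fin n) → ℝ) ≃ₗ[ℝ] symMatrix n := by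
  refine LinearEquiv.ofBijective
    { toFun := fun f => ⟨Matrix.of (fun i j => f s(i, j)), by
        ext i j
        simp [Matrix.IsSymm, Matrix.transpose, Sym2.eq_swap]⟩
      map_add' := fun f g => Subtype.ext rfl
      map_smul' := fun c f => Subtype.ext rfl } ⟨?_, ?_⟩
  · intro f g h
    funext s
    induction s using Sym2.ind with
    | _ i j => exact congrFun (congrFun (congrArg (Subtype.val) h) i) j
  · rintro ⟨A, hA⟩
    refine ⟨Sym2.lift ⟨fun i j => A i j, fun i j => ?_⟩, ?_⟩
    · have := congrFun (congrFun hA j) i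
      simpa [Matrix.transpose] using this
    · ext i j
      simp

/-- Let `r₁, …, r_N` (`N = n(n+1)/2`) be the positive roots of the `Aₙ` configuration in `ℝⁿ`,
i.e. an enumeration of the vectors `v₁, …, vₙ` (with `⟨vᵢ, vⱼ⟩ = 2` if `i = j` and `1`
otherwise) together with the differences `vᵢ − vⱼ` for `i < j`.  The linear map sending a
symmetric matrix `A` to `(⟨A r₁, r₁⟩, …, ⟨A r_N, r_N⟩) ∈ ℝ^N` is a linear isomorphism: it is
injective, and since the space of symmetric matrices has dimension `N` it is also surjective. -/
theorem bijective_quadratic_evaluation_on_positive_roots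
    {n : ℕ} (hn : 1 ≤ n) (N : ℕ) (hN : N = n * (n + 1) / 2)
    (v : Fin n → EuclideanSpace ℝ (Fin n))
    (hv : ∀ i j, ⟪v i, v j⟫_ℝ = if i = j then 2 else 1)
    (r : Fin N → EuclideanSpace ℝ (Fin n))
    (hrinj : Function.Injective r)
    (hr : Set.range r = Set.range v ∪ {x | ∃ i j : Fin n, i < j ∧ x = v i - v j}) :
    (Module.finrank ℝ (symMatrix n) = N) ∧
    ∃ L : symMatrix n →ₗ[ℝ] (Fin N → ℝ),
      (∀ A : symMatrix n, L A = fun k => ⟪mdot (A : Matrix (Fin n) (Fin n) ℝ) (r k), r k⟫_ℝ) ∧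
      Function.Injective L ∧ Function.Surjective L ∧ Function.Bijective L := by
  -- dimension count
  have hdim : Module.finrank ℝ (symMatrix n) = N := by
    rw [← (symMatrixEquiv n).finrank_eq, Module.finrank_fintype_fun_eq_card, Sym2.card,
      hN, Nat.choose_two_right]
    simp [Nat.mul_comm]
  refine ⟨hdim, ?_⟩
  -- the linear map
  set L : symMatrix n →ₗ[ℝ] (Fin N → ℝ) :=
    { toFun := fun A => fun k => ⟪mdot (A : Matrix (Fin n) (Fin n) ℝ) (r k), r k⟫_ℝ
      map_add' := fun A B => by
        funext k
        simp only [Submodule.coe_add, inner_mdot, Matrix.add_mulVec, add_dotProduct,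
          Pi.add_apply]
      map_smul' := fun c A => by
        funext k
        simp only [SetLike.val_smul, inner_mdot, Matrix.smul_mulVec,
          smul_dotProduct, Pi.smul_apply, smul_eq_mul, RingHom.id_apply] } with hLdef
  -- `v` is linearly independent, hence a basis
  have hli : LinearIndependent ℝ v := by
    rw [Fintype.linearIndependent_iff]
    intro g hg
    have key : ∀ j, (∑ i, g i) + g j = 0 := by
      intro j
      have h0 : ⟪∑ i, g i • v i, v j⟫_ℝ = 0 := by rw [hg]; simp
      rw [sum_inner] at h0
      have h1 : ∀ i, ⟪g i • v i, v j⟫_ℝ = g i + (if i = j then g i else 0) := by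
        intro i
        rw [real_inner_smul_left, hv]
        by_cases h : i = j <;> simp [h] <;> ring
      rw [Finset.sum_congr rfl (fun i _ => h1 i), Finset.sum_add_distrib,
        Finset.sum_ite_eq' Finset.univ j g] at h0
      simpa using h0
    have hsum : (∑ i, g i) = 0 := by
      have h1 : ∑ j : Fin n, ((∑ i, g i) + g j) = 0 := by
        rw [Finset.sum_congr rfl (fun j _ => key j)]; simp
      rw [Finset.sum_add_distrib, Finset.sum_const, Finset.card_univ, Fintype.card_fin,
        nsmul_eq_mul] at h1
      have h2 : ((n : ℝ) + 1) * (∑ i, g i) = 0 := by linarith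
      have hne : ((n : ℝ) + 1) ≠ 0 := by positivity
      exact (mul_eq_zero.mp h2).resolve_left hne
    intro i
    have := key i
    rw [hsum] at this
    linarith
  haveI : Nonempty (Fin n) := ⟨⟨0, hn⟩⟩
  obtain ⟨hb, hbv⟩ : ∃ b : Module.Basis (Fin n) ℝ (EuclideanSpace ℝ (Fin n)), ∀ i, b i = v i :=
    ⟨basisOfLinearIndependentOfCardEqFinrank hli (by simp),
     fun i => congrFun (coe_basisOfLinearIndependentOfCardEqFinrank hli (by simp)) i⟩
  -- injectivity
  have hinj : Function.Injective L := by
    rw [injective_iff_map_eq_zero]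
    rintro ⟨A, hA⟩ hA0
    have hA' : A.IsSymm := hA
    have hroot : ∀ x ∈ Set.range r, ⟪mdot A x, x⟫_ℝ = 0 := by
      rintro x ⟨k, rfl⟩
      exact congrFun hA0 k
    have hdiag : ∀ i, ⟪mdot A (v i), v i⟫_ℝ = 0 := fun i =>
      hroot _ (by rw [hr]; exact Or.inl ⟨i, rfl⟩)
    have hoff : ∀ i j, i ≠ j → ⟪mdot A (v i), v j⟫_ℝ = 0 := by
      have hlt : ∀ i j : Fin n, i < j → ⟪mdot A (v i), v j⟫_ℝ = 0 := by
        intro i j hij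
        have h1 : ⟪mdot A (v i - v j), v i - v j⟫_ℝ = 0 :=
          hroot _ (by rw [hr]; exact Or.inr ⟨i, j, hij, rfl⟩)
        have hsub : mdot A (v i - v j) = mdot A (v i) - mdot A (v j) := by
          simp [mdot, Matrix.mulVec_sub]
        rw [hsub, inner_sub_left, inner_sub_right, inner_sub_right,
          hdiag i, hdiag j, inner_mdot_symm A hA' (v j) (v i)] at h1
        linarith
      intro i j hij
      rcases lt_or_gt_of_ne hij with h | h
      · exact hlt i j h
      · rw [inner_mdot_symm A hA']; exact hlt j i h
    have hall : ∀ i j, ⟪mdot A (v i), v j⟫_ℝ = 0 := by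
      intro i j
      by_cases h : i = j
      · subst h; exact hdiag i
      · exact hoff i j h
    have hAv : ∀ i, mdot A (v i) = 0 := by
      intro i
      have h0 : ⟪mdot A (v i), mdot A (v i)⟫_ℝ = 0 := by
        nth_rewrite 2 [← hb.sum_repr (mdot A (v i))]
        rw [inner_sum]
        refine Finset.sum_eq_zero fun j _ => ?_
        rw [real_inner_smul_right, hbv, hall i j, mul_zero]
      exact inner_self_eq_zero.mp h0
    -- mdot A as a linear map
    set e := WithLp.linearEquiv 2 ℝ (Fin n → ℝ) with he
    set F : EuclideanSpace ℝ (Fin n) →ₗ[ℝ] EuclideanSpace ℝ (Fin n) :=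
      e.symm.toLinearMap ∘ₗ A.mulVecLin ∘ₗ e.toLinearMap with hFdef
    have hF : ∀ x, F x = mdot A x := fun x => rfl
    have hF0 : F = 0 := hb.ext fun i => by rw [hF, hbv, hAv i]; rfl
    have hAx : ∀ x : EuclideanSpace ℝ (Fin n), mdot A x = 0 := by
      intro x; rw [← hF, hF0]; rfl
    have hA0' : A = 0 := by
      ext i j
      have := congrArg (fun x => x i) (hAx ((WithLp.equiv 2 (Fin n → ℝ)).symm (Pi.single j 1)))
      simpa [mdot, Matrix.mulVec_single] using this
    exact Subtype.ext hA0'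
  have hcod : Module.finrank ℝ (Fin N → ℝ) = N := by simp
  have hsurj : Function.Surjective L := by
    rw [← LinearMap.range_eq_top]
    apply Submodule.eq_top_of_finrank_eq
    rw [LinearMap.finrank_range_of_inj hinj, hdim, hcod]
  exact ⟨L, fun A => rfl, hinj, hsurj, hinj, hsurj⟩
end

section
/- Let v, w ∈ ℝⁿ, let H₁ be a symmetric n×n real matrix, let φ, ψ, χ : ℝⁿ → ℝ be differentiable functions with compact support, and let c, c′ ∈ ℝ be such that for all x ∈ ℝⁿ: (i) ⟨H₁v, v⟩ + 2⟨v, ∇φ(x)⟩ = 0; (ii) ⟨H₁(v − w), v⟩ + ⟨∇χ(x), v⟩ + ⟨∇φ(x), v − w⟩ = c; (iii) ⟨H₁(v − w), w⟩ + ⟨∇χ(x), w⟩ + ⟨∇ψ(x), v − w⟩ = c′; (iv) ⟨H₁w, w⟩ + 2⟨w, ∇ψ(x)⟩ = 0. Then ⟨∇χ(x) − ∇φ(x) + ∇ψ(x), v + w⟩ = 0 for all x ∈ ℝⁿ; in particular c + c′ = 0. -/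
open Matrix
open scoped InnerProductSpace

lemma mdot_sub {n : ℕ} (A : Matrix (Fin n) (Fin n) ℝ) (x y : EuclideanSpace ℝ (Fin n)) :
    mdot A (x - y) = mdot A x - mdot A y := by
  simp only [mdot, WithLp.equiv_apply, WithLp.ofLp_sub, Matrix.mulVec_sub, WithLp.equiv_symm_apply, WithLp.toLp_sub]

lemma mdot_inner_comm {n : ℕ} {A : Matrix (Fin n) (Fin n) ℝ} (hA : A.IsSymm)
    (x y : EuclideanSpace ℝ (Fin n)) :
    ⟪mdot A x, y⟫_ℝ = ⟪mdot A y, x⟫_ℝ := by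
  have key : ∀ (u z : EuclideanSpace ℝ (Fin n)), ⟪mdot A u, z⟫_ℝ = (A.mulVec u) ⬝ᵥ z := by
    intro u z
    simp only [mdot, PiLp.inner_apply, RCLike.inner_apply, conj_trivial,
      WithLp.equiv_symm_apply, WithLp.equiv_apply, WithLp.ofLp_toLp]
    exact Finset.sum_congr rfl (fun _ _ => mul_comm _ _)
  rw [key, key, dotProduct_comm, Matrix.dotProduct_mulVec, ← Matrix.vecMul_transpose,
    hA.eq]

lemma gradient_of_not_mem_tsupport {n : ℕ} {f : EuclideanSpace ℝ (Fin n) → ℝ}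
    {x : EuclideanSpace ℝ (Fin n)} (h : x ∉ tsupport f) : gradient f x = 0 := by
  simp [gradient, fderiv_of_notMem_tsupport (𝕜 := ℝ) h]

/-- Let `H₁` be a symmetric matrix, `φ, ψ, χ` differentiable functions and `c, c′` constants
satisfying the four order-`ε` identities
(i)   `⟨H₁v, v⟩ + 2⟨v, ∇φ⟩ = 0`,
(ii)  `⟨H₁(v − w), v⟩ + ⟨∇χ, v⟩ + ⟨∇φ, v − w⟩ = c`,
(iii) `⟨H₁(v − w), w⟩ + ⟨∇χ, w⟩ + ⟨∇ψ, v − w⟩ = c′`,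
(iv)  `⟨H₁w, w⟩ + 2⟨w, ∇ψ⟩ = 0`
for all `x`.  If moreover `φ, ψ, χ` have compact support, then `⟨∇χ(x) − ∇φ(x) + ∇ψ(x), v + w⟩ = 0` for all `x`; in particular `c + c′ = 0`. -/
theorem gradient_combination_zero
    {n : ℕ} (v w : EuclideanSpace ℝ (Fin n))
    (H₁ : Matrix (Fin n) (Fin n) ℝ) (hH₁ : H₁.IsSymm)
    (φ ψ χ : EuclideanSpace ℝ (Fin n) → ℝ)
    (hφ : Differentiable ℝ φ) (hφs : HasCompactSupport φ) (hψ : Differentiable ℝ ψ) (hψs : HasCompactSupport ψ) (hχ : Differentiable ℝ χ) (hχs : HasCompactSupport χ)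
    (c c' : ℝ)
    (h₁ : ∀ x, ⟪mdot H₁ v, v⟫_ℝ + 2 * ⟪v, gradient φ x⟫_ℝ = 0)
    (h₂ : ∀ x, ⟪mdot H₁ (v - w), v⟫_ℝ + ⟪gradient χ x, v⟫_ℝ
        + ⟪gradient φ x, v - w⟫_ℝ = c)
    (h₃ : ∀ x, ⟪mdot H₁ (v - w), w⟫_ℝ + ⟪gradient χ x, w⟫_ℝ
        + ⟪gradient ψ x, v - w⟫_ℝ = c')
    (h₄ : ∀ x, ⟪mdot H₁ w, w⟫_ℝ + 2 * ⟪w, gradient ψ x⟫_ℝ = 0) :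
    (∀ x, ⟪gradient χ x - gradient φ x + gradient ψ x, v + w⟫_ℝ = 0) ∧ c + c' = 0 := by
  -- Step 1: the target inner product equals `c + c'` at every point.
  have key : ∀ x, ⟪gradient χ x - gradient φ x + gradient ψ x, v + w⟫_ℝ = c + c' := by
    intro x
    have H1 := h₁ x
    have H2 := h₂ x
    have H3 := h₃ x
    have H4 := h₄ x
    rw [mdot_sub, inner_sub_left, inner_sub_right] at H2 H3
    simp only [inner_add_left, inner_sub_left, inner_add_right, inner_sub_right]
    linarith [real_inner_comm v (gradient φ x), real_inner_comm w (gradient ψ x),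
      mdot_inner_comm hH₁ w v, H1, H2, H3, H4]
  -- Step 2: find a point where all gradients vanish, forcing `c + c' = 0`.
  have hcc : c + c' = 0 := by
    rcases Nat.eq_zero_or_pos n with hn | hn
    · subst hn
      have := key 0
      rw [← this]
      have : v + w = 0 := Subsingleton.elim _ _
      rw [this, inner_zero_right]
    · haveI : Nontrivial (EuclideanSpace ℝ (Fin n)) := by
        refine nontrivial_of_ne (EuclideanSpace.single ⟨0, hn⟩ 1) 0 ?_
        intro h
        have := congrFun (congrArg (WithLp.equiv 2 (Fin n → ℝ)) h) ⟨0, hn⟩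
        simpa using this
      have hK : IsCompact (tsupport φ ∪ tsupport ψ ∪ tsupport χ) :=
        (hφs.union hψs).union hχs
      have hne : tsupport φ ∪ tsupport ψ ∪ tsupport χ ≠ Set.univ := hK.ne_univ
      obtain ⟨x, hx⟩ : ∃ x, x ∉ tsupport φ ∪ tsupport ψ ∪ tsupport χ := by
        by_contra h
        push_neg at h
        exact hne (Set.eq_univ_of_forall h)
      simp only [Set.mem_union, not_or] at hx
      have := key x
      rw [gradient_of_not_mem_tsupport hx.1.1, gradient_of_not_mem_tsupport hx.1.2,
        gradient_of_not_mem_tsupport hx.2] at this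
      simp only [sub_zero, add_zero, inner_zero_left] at this
      linarith
  exact ⟨fun x => by rw [key x, hcc], hcc⟩
end
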